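/- arXiv:1811.08261 — 2 statements merged into one kernel-verified Lean document; each statement's English description precedes it below -/
import Mathlib

section
/- For any nonnegative integers N and k, and positive integer l with N ≥ l, the polynomial identity holds: ∑_{j≥0} x^j q^{lj + kj(j-1)/2} [N - l - (j-1)k + j choose j]_q = ∑_{m,n≥0} x^{m+n} q^{Q_{k,l}(m,n)} [N - (l + (n-1)k + m(k+1)) + m choose m]_q [N - (l + (n-1)k) - km + ⌊n/2⌋ choose ⌊n/2⌋]_{q^2}, where Q_{k,l}(m,n) = (m+n)l + k n(n-1)/2 + (n-1)mk + (k+1)m(m+1)/2. -/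
/-!
Put `D = N - l - (j - 1)k`. The terms of the double sum with `m + n = j` all carry the factor
`x^j q^{lj + k j(j-1)/2}` of the `j`-th single term, so the theorem reduces to the finite identity
`[D + j, j]_q = ∑_{m+n=j} q^{m(m+1)/2} [D, m]_q [D + ⌊n/2⌋, ⌊n/2⌋]_{q²}`, whose two sides
vanish when `D < 0`. For `D ≥ 0` it is the coefficient of `z^j` in
`1 / (z; q)_{D+1} = (-qz; q)_D (1 + z) / (z²; q²)_{D+1}`, which is
`(z; q)_{D+1} (-z; q)_{D+1} = (z²; q²)_{D+1}` after expanding `1 / (z; q)_{D+1}` and `(-qz; q)_D`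
by the q-binomial theorem.

For `k ≥ 1` both sums are finite. For `k = 0` the double sum converges absolutely when
`|x q^l| < 1`; otherwise the single-sum terms do not tend to `0`, because
`[N - l + j, j]_q → 1 / (q; q)_{N-l}`, and both `tsum`s take the junk value `0`.
-/

open Finset

/-- Finite q-Pochhammer symbol `(a; q)_n = ∏_{j=0}^{n-1} (1 - a q^j)`. -/
noncomputable def qPoch (a q : ℂ) (n : ℕ) : ℂ := ∏ j ∈ Finset.range n, (1 - a * q ^ j)

/-- Infinite q-Pochhammer symbol `(a; q)_∞`. -/
noncomputable def qPochInf (a q : ℂ) : ℂ := ∏' j : ℕ, (1 - a * q ^ j)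

/-- Gaussian binomial coefficient `[a choose b]_q`, equal to
`(q;q)_a / ((q;q)_b (q;q)_{a-b})` when `a ≥ b ≥ 0`, and `0` otherwise. -/
noncomputable def qbinom (q : ℂ) (a b : ℤ) : ℂ :=
  if 0 ≤ b ∧ b ≤ a then
    qPoch q q a.toNat / (qPoch q q b.toNat * qPoch q q (a - b).toNat)
  else 0

/-- `Q_{k,l}(m,n) = (m+n)l + k n(n-1)/2 + (n-1)mk + (k+1)m(m+1)/2` (an integer). -/
noncomputable def Qkl (k l m n : ℕ) : ℤ :=
  ((m : ℤ) + n) * l + k * (n * ((n : ℤ) - 1)) / 2 + ((n : ℤ) - 1) * m * k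
    + ((k : ℤ) + 1) * (m * ((m : ℤ) + 1)) / 2

open PowerSeries Filter Topology

lemma qPoch_zero (u : ℂ) : qPoch u u 0 = 1 :=
  prod_range_zero _

lemma qPoch_succ (u : ℂ) (n : ℕ) : qPoch u u (n + 1) = qPoch u u n * (1 - u * u ^ n) :=
  prod_range_succ _ _

lemma qPoch_ne_zero {u : ℂ} (hu : ‖u‖ < 1) (n : ℕ) : qPoch u u n ≠ 0 := by
  refine prod_ne_zero_iff.2 fun i _ h => ?_
  rw [← pow_succ', sub_eq_zero] at h
  have := pow_lt_one₀ (norm_nonneg u) hu i.succ_ne_zero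
  rw [← norm_pow, ← h, norm_one] at this
  exact lt_irrefl _ this

noncomputable def qChoose (u : ℂ) (a b : ℕ) : ℂ :=
  if b ≤ a then qPoch u u a / (qPoch u u b * qPoch u u (a - b)) else 0

lemma qbinom_natCast (u : ℂ) (a b : ℕ) : qbinom u a b = qChoose u a b := by
  by_cases h : b ≤ a <;> simp [qbinom, qChoose, h]

lemma qbinom_of_lt (u : ℂ) {a b : ℤ} (h : a < b) : qbinom u a b = 0 :=
  if_neg fun hb => (h.trans_le hb.2).false

lemma qChoose_of_lt (u : ℂ) {a b : ℕ} (h : a < b) : qChoose u a b = 0 :=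
  if_neg h.not_ge

section QChoose

variable {u : ℂ} (hu : ∀ n, qPoch u u n ≠ 0)
include hu

lemma qChoose_zero_right (a : ℕ) : qChoose u a 0 = 1 := by
  simp [qChoose, qPoch_zero, hu a]

lemma qChoose_self (a : ℕ) : qChoose u a a = 1 := by
  simp [qChoose, qPoch_zero, hu a]

lemma qChoose_succ_succ (a b : ℕ) :
    qChoose u (a + 1) (b + 1) = qChoose u a (b + 1) + u ^ (a - b) * qChoose u a b := by
  rcases lt_trichotomy a b with h | rfl | h
  · rw [qChoose_of_lt u (Nat.succ_lt_succ h), qChoose_of_lt u (h.trans b.lt_succ_self),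
      qChoose_of_lt u h, mul_zero, add_zero]
  · simp [qChoose_self hu, qChoose_of_lt u a.lt_succ_self]
  · obtain ⟨c, rfl⟩ := Nat.exists_eq_add_of_lt h
    have factor_ne_zero (n : ℕ) : 1 - u * u ^ n ≠ 0 :=
      right_ne_zero_of_mul (qPoch_succ u n ▸ hu (n + 1))
    have := hu b
    have := hu c
    have := hu (b + c)
    have := factor_ne_zero b
    have := factor_ne_zero c
    have := factor_ne_zero (b + c)
    simp only [qChoose, if_pos (by omega : b + 1 ≤ b + c + 1 + 1),
      if_pos (by omega : b + 1 ≤ b + c + 1), if_pos (by omega : b ≤ b + c + 1),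
      show b + c + 1 + 1 - (b + 1) = c + 1 by omega, show b + c + 1 - (b + 1) = c by omega,
      show b + c + 1 - b = c + 1 by omega, qPoch_succ u (b + c + 1), qPoch_succ u (b + c),
      qPoch_succ u b, qPoch_succ u c]
    field_simp
    ring

lemma qChoose_add_self_eq_prod (C h : ℕ) :
    qChoose u (C + h) h = (∏ i ∈ range C, (1 - u ^ (h + i + 1))) / qPoch u u C := by
  rw [qChoose, if_pos (Nat.le_add_left h C), Nat.add_sub_cancel, add_comm C]
  have hsplit : qPoch u u (h + C) = qPoch u u h * ∏ i ∈ range C, (1 - u ^ (h + i + 1)) := by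
    simp only [qPoch, prod_range_add, pow_succ']
  rw [hsplit, mul_div_mul_left _ _ (hu h)]

end QChoose

lemma tendsto_qChoose_add_self {u : ℂ} (hu : ‖u‖ < 1) (C : ℕ) :
    Tendsto (fun h => qChoose u (C + h) h) atTop (𝓝 (qPoch u u C)⁻¹) := by
  simp_rw [qChoose_add_self_eq_prod (qPoch_ne_zero hu)]
  have : Tendsto (fun h => ∏ i ∈ range C, (1 - u ^ (h + i + 1))) atTop (𝓝 1) := by
    simpa [add_assoc] using tendsto_finsetProd (range C) fun i _ =>
      ((tendsto_pow_atTop_nhds_zero_of_norm_lt_one hu).comp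
        (tendsto_add_atTop_nat (i + 1))).const_sub 1
  simpa [div_eq_mul_inv] using this.mul_const (qPoch u u C)⁻¹

noncomputable def gaussSeries (u : ℂ) (D : ℕ) : ℂ⟦X⟧ :=
  mk fun j => qChoose u (D + j) j

noncomputable def qBinomialSeries (u : ℂ) (D : ℕ) : ℂ⟦X⟧ :=
  mk fun m => u ^ (m * (m + 1) / 2) * qChoose u D m

section GeneratingFunctions

variable {u : ℂ} (hu : ∀ n, qPoch u u n ≠ 0)
include hu

lemma one_sub_C_mul_X_mul_gaussSeries_succ (D : ℕ) :
    (1 - C (u ^ (D + 1)) * X) * gaussSeries u (D + 1) = gaussSeries u D := by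
  ext (_ | j)
  · simp [gaussSeries, qChoose_zero_right hu]
  · simp only [sub_mul, one_mul, mul_assoc, map_sub, coeff_C_mul, coeff_succ_X_mul, gaussSeries,
      coeff_mk]
    rw [show D + 1 + (j + 1) = D + 1 + j + 1 by omega, qChoose_succ_succ hu,
      show D + 1 + j - j = D + 1 by omega, show D + (j + 1) = D + 1 + j by omega]
    ring

lemma prod_one_sub_C_mul_X_mul_gaussSeries (D : ℕ) :
    (∏ i ∈ range (D + 1), (1 - C (u ^ i) * X)) * gaussSeries u D = 1 := by
  induction D with
  | zero =>
    have : gaussSeries u 0 = PowerSeries.mk 1 := by ext j; simp [gaussSeries, qChoose_self hu]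
    simpa [this, mul_comm] using mk_one_mul_one_sub_eq_one ℂ
  | succ D ih => rw [prod_range_succ, mul_assoc, one_sub_C_mul_X_mul_gaussSeries_succ hu, ih]

lemma prod_one_add_C_mul_X (D : ℕ) :
    ∏ i ∈ range D, (1 + C (u ^ (i + 1)) * X) = qBinomialSeries u D := by
  induction D with
  | zero =>
    ext (_ | m)
    · simp [qBinomialSeries, qChoose_zero_right hu]
    · simp [qBinomialSeries, qChoose_of_lt u m.succ_pos]
  | succ D ih =>
    rw [prod_range_succ, ih]
    ext (_ | m)
    · simp [qBinomialSeries, qChoose_zero_right hu]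
    · rw [mul_add, mul_one, mul_left_comm, map_add, coeff_C_mul, coeff_succ_mul_X]
      simp only [qBinomialSeries, coeff_mk, qChoose_succ_succ hu]
      rcases lt_or_ge D m with h | h
      · simp [qChoose_of_lt u h]
      · have : (m + 1) * (m + 1 + 1) / 2 = m * (m + 1) / 2 + (m + 1) := by
          rw [show (m + 1) * (m + 1 + 1) = m * (m + 1) + 2 * (m + 1) by ring,
            Nat.add_mul_div_left _ _ two_pos]
        rw [this, show D + 1 = D - m + (m + 1) by omega]
        ring

end GeneratingFunctions

lemma coeff_one_add_X_mul_expand_two {R : Type*} [CommRing R] (f : R⟦X⟧) (n : ℕ) :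
    coeff n ((1 + X) * expand 2 two_ne_zero f) = coeff (n / 2) f := by
  rw [add_mul, one_mul, map_add]
  rcases n with _ | n
  · simp [coeff_expand]
  rw [coeff_succ_X_mul, coeff_expand, coeff_expand]
  rcases Nat.even_or_odd' n with ⟨p, rfl | rfl⟩
  · rw [if_neg (by omega), if_pos (by omega), zero_add, show (2 * p + 1) / 2 = 2 * p / 2 by omega]
  · rw [if_pos (by omega), if_neg (by omega), add_zero]

section KeyIdentity

variable {u : ℂ} (hu : ∀ n, qPoch u u n ≠ 0) (hu2 : ∀ n, qPoch (u ^ 2) (u ^ 2) n ≠ 0)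
include hu hu2

theorem gaussSeries_eq_qBinomialSeries_mul (D : ℕ) :
    gaussSeries u D
      = qBinomialSeries u D * ((1 + X) * expand 2 two_ne_zero (gaussSeries (u ^ 2) D)) := by
  have hP' : ∏ i ∈ range (D + 1), (1 + C (u ^ i) * X) = (1 + X) * qBinomialSeries u D := by
    rw [prod_range_succ', prod_one_add_C_mul_X hu, pow_zero, map_one, one_mul, mul_comm]
  set P := ∏ i ∈ range (D + 1), (1 - C (u ^ i) * X)
  set P' := ∏ i ∈ range (D + 1), (1 + C (u ^ i) * X)
  set E := expand 2 two_ne_zero (gaussSeries (u ^ 2) D)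
  have hPP' : P * P' * E = 1 := by
    have h := congrArg (expand 2 two_ne_zero) (prod_one_sub_C_mul_X_mul_gaussSeries hu2 D)
    rw [map_mul, map_prod, map_one] at h
    rw [← h, ← prod_mul_distrib]
    congr 1
    refine prod_congr rfl fun i _ => ?_
    simp only [map_sub, map_mul, map_one, expand_C, expand_X, ← pow_mul, map_pow]
    ring
  calc gaussSeries u D = gaussSeries u D * (P * P' * E) := by rw [hPP', mul_one]
    _ = (P * gaussSeries u D) * (P' * E) := by ring
    _ = _ := by rw [prod_one_sub_C_mul_X_mul_gaussSeries hu, one_mul, hP']; ring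

theorem qChoose_add_self_eq_sum (D j : ℕ) :
    qChoose u (D + j) j = ∑ p ∈ antidiagonal j,
      u ^ (p.1 * (p.1 + 1) / 2) * qChoose u D p.1 * qChoose (u ^ 2) (D + p.2 / 2) (p.2 / 2) := by
  have h := congrArg (coeff j) (gaussSeries_eq_qBinomialSeries_mul hu hu2 D)
  rw [coeff_mul] at h
  simpa only [gaussSeries, qBinomialSeries, coeff_one_add_X_mul_expand_two, coeff_mk] using h

theorem qbinom_add_self_eq_sum (D : ℤ) (j : ℕ) :
    qbinom u (D + j) j = ∑ p ∈ antidiagonal j,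
      u ^ (p.1 * (p.1 + 1) / 2) * qbinom u D p.1
        * qbinom (u ^ 2) (D + (p.2 / 2 : ℕ)) (p.2 / 2 : ℕ) := by
  rcases lt_or_ge D 0 with hD | hD
  · rw [qbinom_of_lt u (by omega)]
    refine (sum_eq_zero fun p _ => ?_).symm
    rw [qbinom_of_lt u (by omega : D < p.1), mul_zero, zero_mul]
  · lift D to ℕ using hD
    simp only [← Nat.cast_add, qbinom_natCast]
    exact qChoose_add_self_eq_sum hu hu2 D j

end KeyIdentity

lemma Summable.tsum_eq_tsum_sum_antidiagonal {A α : Type*} [AddCommMonoid A] [HasAntidiagonal A]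
    [AddCommGroup α] [UniformSpace α] [IsUniformAddGroup α] [CompleteSpace α] [T0Space α]
    {f : A × A → α} (hf : Summable f) :
    ∑' p, f p = ∑' a, ∑ p ∈ antidiagonal a, f p := by
  rw [← HasAntidiagonal.sigmaAntidiagonalEquivProd.tsum_eq f]
  exact (HasAntidiagonal.sigmaAntidiagonalEquivProd.summable_iff.2 hf).tsum_sigma.trans
    (tsum_congr fun a => tsum_subtype _ _)

lemma Qkl_eq (k l m n : ℕ) :
    Qkl k l m n
      = ((l * (m + n) + k * ((m + n) * (m + n - 1) / 2) + m * (m + 1) / 2 : ℕ) : ℤ) := by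
  have two_mul_half (a : ℕ) : (2 : ℤ) * ((a * (a - 1) / 2 : ℕ) : ℤ) = a * ((a : ℤ) - 1) := by
    rw [← Nat.cast_ofNat, ← Nat.cast_mul,
      Nat.two_mul_div_two_of_even (Nat.even_mul_pred_self a)]
    rcases a with _ | a <;> simp
  have hS : (2 : ℤ) * ((m * (m + 1) / 2 : ℕ) : ℤ) = m * ((m : ℤ) + 1) := by
    exact_mod_cast Nat.two_mul_div_two_of_even (Nat.even_mul_succ_self m)
  have hT := two_mul_half n
  have hj : (((m + n) * (m + n - 1) / 2 : ℕ) : ℤ)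
      = ((n * (n - 1) / 2 : ℕ) : ℤ) + ((m * (m + 1) / 2 : ℕ) : ℤ) + ((n : ℤ) - 1) * m := by
    have := two_mul_half (m + n)
    rw [Nat.cast_add] at this
    linarith
  rw [Qkl, ← hT, ← hS, mul_left_comm, Int.mul_ediv_cancel_left _ two_ne_zero, mul_left_comm,
    Int.mul_ediv_cancel_left _ two_ne_zero]
  simp only [Nat.cast_add, Nat.cast_mul]
  linear_combination (-(k : ℤ)) * hj

noncomputable def singleTerm (N k l : ℕ) (q x : ℂ) (j : ℕ) : ℂ :=
  x ^ j * q ^ (l * j + k * (j * (j - 1) / 2)) * qbinom q ((N : ℤ) - l - ((j : ℤ) - 1) * k + j) j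

noncomputable def doubleTerm (N k l : ℕ) (q x : ℂ) (p : ℕ × ℕ) : ℂ :=
  x ^ (p.1 + p.2) * q ^ (Qkl k l p.1 p.2)
    * qbinom q ((N : ℤ) - ((l : ℤ) + ((p.2 : ℤ) - 1) * k + p.1 * ((k : ℤ) + 1)) + p.1) p.1
    * qbinom (q ^ 2) ((N : ℤ) - ((l : ℤ) + ((p.2 : ℤ) - 1) * k) - k * p.1 + (p.2 / 2 : ℕ))
        ((p.2 / 2 : ℕ) : ℤ)

section Terms

variable {N k l : ℕ} {q x : ℂ}

lemma doubleTerm_of_add_eq {m n j : ℕ} (h : m + n = j) :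
    doubleTerm N k l q x (m, n) = x ^ j * q ^ (l * j + k * (j * (j - 1) / 2))
      * (q ^ (m * (m + 1) / 2) * qbinom q (N - l - ((j : ℤ) - 1) * k) m
        * qbinom (q ^ 2) (N - l - ((j : ℤ) - 1) * k + (n / 2 : ℕ)) (n / 2 : ℕ)) := by
  subst h
  have e₁ : (N : ℤ) - (l + ((n : ℤ) - 1) * k + m * ((k : ℤ) + 1)) + m
      = N - l - (((m + n : ℕ) : ℤ) - 1) * k := by push_cast; ring
  have e₂ : (N : ℤ) - (l + ((n : ℤ) - 1) * k) - k * m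
      = N - l - (((m + n : ℕ) : ℤ) - 1) * k := by push_cast; ring
  rw [doubleTerm, Qkl_eq, zpow_natCast, pow_add, e₁, e₂]
  ring

lemma sum_antidiagonal_doubleTerm (hq : ‖q‖ < 1) (j : ℕ) :
    ∑ p ∈ antidiagonal j, doubleTerm N k l q x p = singleTerm N k l q x j := by
  have hq2 : ‖q ^ 2‖ < 1 := by simpa using pow_lt_one₀ (norm_nonneg q) hq two_ne_zero
  rw [singleTerm, qbinom_add_self_eq_sum (qPoch_ne_zero hq) (qPoch_ne_zero hq2), mul_sum]
  exact sum_congr rfl fun p hp => doubleTerm_of_add_eq (mem_antidiagonal.1 hp)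

lemma summable_doubleTerm_of_ne_zero (hk : k ≠ 0) : Summable (doubleTerm N k l q x) := by
  refine summable_of_ne_finset_zero (s := range (N + 2) ×ˢ range (N + 2)) fun ⟨m, n⟩ hp => ?_
  simp only [mem_product, mem_range, not_and_or, not_lt] at hp
  have hD : (N : ℤ) - l - (((m + n : ℕ) : ℤ) - 1) * k < m := by
    have : (1 : ℤ) ≤ k := by exact_mod_cast Nat.one_le_iff_ne_zero.2 hk
    have : (N : ℤ) + 2 ≤ m + n := by exact_mod_cast (by omega : N + 2 ≤ m + n)
    push_cast
    nlinarith
  rw [doubleTerm_of_add_eq rfl, qbinom_of_lt q hD]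
  ring

lemma doubleTerm_zero (hN : l ≤ N) (m n : ℕ) :
    doubleTerm N 0 l q x (m, n)
      = ((x * q ^ l) ^ m * q ^ (m * (m + 1) / 2) * qChoose q (N - l) m)
        * ((x * q ^ l) ^ n * qChoose (q ^ 2) (N - l + n / 2) (n / 2)) := by
  have hD : (N : ℤ) - l - (((m + n : ℕ) : ℤ) - 1) * (0 : ℕ) = ((N - l : ℕ) : ℤ) := by
    push_cast [hN]
    ring
  rw [doubleTerm_of_add_eq rfl, hD, ← Nat.cast_add, qbinom_natCast, qbinom_natCast]
  ring

lemma singleTerm_zero (hN : l ≤ N) (j : ℕ) :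
    singleTerm N 0 l q x j = (x * q ^ l) ^ j * qChoose q (N - l + j) j := by
  have hD : (N : ℤ) - l - ((j : ℤ) - 1) * (0 : ℕ) + j = ((N - l + j : ℕ) : ℤ) := by
    push_cast [hN]
    ring
  rw [singleTerm, hD, qbinom_natCast]
  ring

lemma summable_doubleTerm_zero (hN : l ≤ N) (hq : ‖q‖ < 1) (hr : ‖x * q ^ l‖ < 1) :
    Summable (doubleTerm N 0 l q x) := by
  have hq2 : ‖q ^ 2‖ < 1 := by simpa using pow_lt_one₀ (norm_nonneg q) hq two_ne_zero
  obtain ⟨M, hM⟩ := (tendsto_qChoose_add_self hq2 (N - l)).norm.bddAbove_range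
  have hm : Summable fun m => ‖(x * q ^ l) ^ m * q ^ (m * (m + 1) / 2) * qChoose q (N - l) m‖ :=
    summable_of_ne_finset_zero (s := range (N - l + 1)) fun m hm => by
      rw [qChoose_of_lt q (by simpa [Nat.lt_succ_iff] using hm), mul_zero, norm_zero]
  have hn : Summable fun n => ‖(x * q ^ l) ^ n * qChoose (q ^ 2) (N - l + n / 2) (n / 2)‖ := by
    refine .of_nonneg_of_le (fun _ => norm_nonneg _) (fun n => ?_)
      ((summable_geometric_of_lt_one (norm_nonneg _) hr).mul_right M)
    rw [norm_mul, norm_pow]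
    exact mul_le_mul_of_nonneg_left (hM ⟨n / 2, rfl⟩) (by positivity)
  exact (summable_mul_of_summable_norm hm hn).congr fun ⟨m, n⟩ => (doubleTerm_zero hN m n).symm

lemma not_summable_singleTerm_zero (hN : l ≤ N) (hq : ‖q‖ < 1) (hr : 1 ≤ ‖x * q ^ l‖) :
    ¬ Summable (singleTerm N 0 l q x) := fun hs => by
  have hlim := hs.tendsto_atTop_zero.norm
  rw [norm_zero] at hlim
  have hle : ‖(qPoch q q (N - l))⁻¹‖ ≤ 0 :=
    le_of_tendsto_of_tendsto' (tendsto_qChoose_add_self hq (N - l)).norm hlim fun j => by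
      rw [singleTerm_zero hN, norm_mul, norm_pow]
      exact le_mul_of_one_le_left (norm_nonneg _) (one_le_pow₀ hr)
  exact (norm_pos_iff.2 (inv_ne_zero (qPoch_ne_zero hq _))).not_ge hle

end Terms

theorem stmt2_general (N k l : ℕ) (hN : l ≤ N) (q x : ℂ)
    (hq : ‖q‖ < 1) :
    ∑' j : ℕ, x ^ j * q ^ (l * j + k * (j * (j - 1) / 2))
        * qbinom q ((N : ℤ) - l - ((j : ℤ) - 1) * k + j) j
      = ∑' p : ℕ × ℕ, x ^ (p.1 + p.2) * q ^ (Qkl k l p.1 p.2)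
          * qbinom q ((N : ℤ) - ((l : ℤ) + ((p.2 : ℤ) - 1) * k + p.1 * ((k : ℤ) + 1)) + p.1) p.1
          * qbinom (q ^ 2)
              ((N : ℤ) - ((l : ℤ) + ((p.2 : ℤ) - 1) * k) - k * p.1 + (p.2 / 2 : ℕ))
              ((p.2 / 2 : ℕ) : ℤ) := by
  change ∑' j, singleTerm N k l q x j = ∑' p, doubleTerm N k l q x p
  by_cases hf : Summable (doubleTerm N k l q x)
  · rw [hf.tsum_eq_tsum_sum_antidiagonal]
    exact tsum_congr fun j => (sum_antidiagonal_doubleTerm hq j).symm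
  obtain rfl : k = 0 := by_contra fun hk => hf (summable_doubleTerm_of_ne_zero hk)
  have hr : 1 ≤ ‖x * q ^ l‖ := not_lt.1 fun hr => hf (summable_doubleTerm_zero hN hq hr)
  rw [tsum_eq_zero_of_not_summable hf,
    tsum_eq_zero_of_not_summable (not_summable_singleTerm_zero hN hq hr)]

/-- polynomial analogue (bounded largest part `N`) of the
single-sum = double-sum identity for uniform gap conditions. -/
theorem stmt2 (N k l : ℕ) (hl : 0 < l) (hN : l ≤ N) (q x : ℂ) (hq0 : q ≠ 0)
    (hq : ‖q‖ < 1) :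
    ∑' j : ℕ, x ^ j * q ^ (l * j + k * (j * (j - 1) / 2))
        * qbinom q ((N : ℤ) - l - ((j : ℤ) - 1) * k + j) j
      = ∑' p : ℕ × ℕ, x ^ (p.1 + p.2) * q ^ (Qkl k l p.1 p.2)
          * qbinom q ((N : ℤ) - ((l : ℤ) + ((p.2 : ℤ) - 1) * k + p.1 * ((k : ℤ) + 1)) + p.1) p.1
          * qbinom (q ^ 2)
              ((N : ℤ) - ((l : ℤ) + ((p.2 : ℤ) - 1) * k) - k * p.1 + (p.2 / 2 : ℕ))
              ((p.2 / 2 : ℕ) : ℤ) :=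
  stmt2_general N k l hN q x hq
end

section
/- For every nonnegative integer N, ∑_{m,n≥0} q^{G(m,n)} [2N - 2m - 2n + 2 choose m]_q [N - m - n + 1 + ⌊n/2⌋ choose ⌊n/2⌋]_{q^4} = ∑_{m,n≥0} q^{m²+n²} [N - m + 1 choose n]_{q^2} [n choose m]_{q^2}, where G(m,n) = (3m² + m)/2 + 2mn + n². -/
open Finset

/-- `G(m,n) = (3m² + m)/2 + 2mn + n²`. -/
def Ggg (m n : ℕ) : ℕ := (3 * m ^ 2 + m) / 2 + 2 * m * n + n ^ 2

/-!
Split the left side by the parity of `n = 2j + ε`. Each of the two parts, and the right side,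
satisfies the recurrence
`u (N + 3) = u (N + 2) + (q^(2N+6) + q^(2N+7) + q^(4N+12)) u (N + 1) + q^(4N+11) u N`:
for the left side, apply the `q`-Pascal rule once to the `q⁴`-binomial and twice to the
`q`-binomial, then shift the summation indices; the right side even satisfies
`u (N + 2) = (1 + q^(2N+5)) u (N + 1) + q^(2N+4) u N` by the same method. With the sums indexed
by `ℤ × ℤ` and `N ∈ ℤ`, these recurrences hold from `N = -2` on, and there both sides have at most
two nonzero terms and take the values `0`, `1`, `1 + q`.
-/

section QBinomial

variable {Q : ℂ}

lemma qPoch_self_succ (n : ℕ) : qPoch Q Q (n + 1) = qPoch Q Q n * (1 - Q ^ (n + 1)) := by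
  rw [qPoch, prod_range_succ, ← qPoch, pow_succ']

lemma qPoch_self_ne_zero (hQ : ∀ n : ℕ, Q ^ (n + 1) ≠ 1) (n : ℕ) : qPoch Q Q n ≠ 0 := by
  induction n with
  | zero => simp [qPoch]
  | succ n ih => rw [qPoch_self_succ]; exact mul_ne_zero ih (sub_ne_zero.2 (hQ n).symm)

lemma qbinom_eq_zero {a b : ℤ} (h : ¬(0 ≤ b ∧ b ≤ a)) : qbinom Q a b = 0 := if_neg h

lemma le_of_qbinom_ne_zero {a b : ℤ} (h : qbinom Q a b ≠ 0) : 0 ≤ b ∧ b ≤ a :=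
  not_not.1 (mt qbinom_eq_zero h)

lemma qbinom_natCast_s4 {A B : ℕ} (h : B ≤ A) :
    qbinom Q A B = qPoch Q Q A / (qPoch Q Q B * qPoch Q Q (A - B)) := by
  rw [qbinom, if_pos (by omega), Int.toNat_natCast, Int.toNat_natCast, ← Nat.cast_sub h,
    Int.toNat_natCast]

lemma qbinom_sub_right (a b : ℤ) : qbinom Q a (a - b) = qbinom Q a b := by
  unfold qbinom
  rw [sub_sub_cancel, mul_comm]
  exact if_congr (by omega) rfl rfl

lemma qbinom_zero_right (hQ : ∀ n : ℕ, Q ^ (n + 1) ≠ 1) {a : ℤ} (ha : 0 ≤ a) :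
    qbinom Q a 0 = 1 := by
  lift a to ℕ using ha
  rw [← Nat.cast_zero, qbinom_natCast_s4 (Nat.zero_le a), Nat.sub_zero,
    show qPoch Q Q 0 = 1 from prod_range_zero _, one_mul, div_self (qPoch_self_ne_zero hQ a)]

lemma qbinom_self (hQ : ∀ n : ℕ, Q ^ (n + 1) ≠ 1) {a : ℤ} (ha : 0 ≤ a) : qbinom Q a a = 1 := by
  rw [← qbinom_sub_right, sub_self, qbinom_zero_right hQ ha]

lemma qbinom_pascal_natCast (hQ : ∀ n : ℕ, Q ^ (n + 1) ≠ 1) (C D : ℕ) :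
    qbinom Q (C + D + 2 : ℕ) (C + 1 : ℕ) =
      qbinom Q (C + D + 1 : ℕ) (C + 1 : ℕ) + Q ^ (D + 1) * qbinom Q (C + D + 1 : ℕ) C := by
  rw [qbinom_natCast_s4 (by omega), qbinom_natCast_s4 (by omega), qbinom_natCast_s4 (by omega),
    show C + D + 2 - (C + 1) = D + 1 by omega, show C + D + 1 - (C + 1) = D by omega,
    show C + D + 1 - C = D + 1 by omega, show C + D + 2 = C + D + 1 + 1 by omega,
    qPoch_self_succ (C + D + 1), qPoch_self_succ C, qPoch_self_succ D]
  have := qPoch_self_ne_zero hQ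
  have hC := sub_ne_zero.2 (hQ C).symm
  have hD := sub_ne_zero.2 (hQ D).symm
  field_simp
  ring

-- `a = -1, b = 0` is the one exception: `[0, 0] = 1`, while both terms on the right vanish.
lemma qbinom_add_one_left (hQ : ∀ n : ℕ, Q ^ (n + 1) ≠ 1) {a b : ℤ} (h : a + 1 ≠ 0 ∨ b ≠ 0) :
    qbinom Q (a + 1) b = qbinom Q a b + Q ^ (a + 1 - b) * qbinom Q a (b - 1) := by
  by_cases hb : 0 ≤ b ∧ b ≤ a + 1
  swap
  · rw [qbinom_eq_zero hb, qbinom_eq_zero (by omega), qbinom_eq_zero (by omega), mul_zero,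
      add_zero]
  obtain rfl | hb0 := eq_or_ne b 0
  · rw [qbinom_zero_right hQ hb.2, qbinom_zero_right hQ (by omega), qbinom_eq_zero (by omega),
      mul_zero, add_zero]
  obtain rfl | hba := eq_or_ne b (a + 1)
  · rw [qbinom_self hQ (by omega), qbinom_eq_zero (by omega), add_sub_cancel_right, sub_self,
      zpow_zero, one_mul, qbinom_self hQ (by omega), zero_add]
  obtain ⟨C, rfl⟩ : ∃ C : ℕ, b = C + 1 := ⟨(b - 1).toNat, by omega⟩
  obtain ⟨D, rfl⟩ : ∃ D : ℕ, a = C + D + 1 := ⟨(a - C - 1).toNat, by omega⟩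
  have := qbinom_pascal_natCast hQ C D
  push_cast at this
  rw [show (C : ℤ) + D + 1 + 1 - (C + 1) = (D + 1 : ℕ) by push_cast; ring, zpow_natCast,
    add_sub_cancel_right, show (C : ℤ) + D + 1 + 1 = C + D + 2 by ring, this]

lemma qbinom_add_one_left' (hQ : ∀ n : ℕ, Q ^ (n + 1) ≠ 1) {a b : ℤ} (h : a + 1 ≠ 0 ∨ b ≠ 0) :
    qbinom Q (a + 1) b = Q ^ b * qbinom Q a b + qbinom Q a (b - 1) := by
  rw [← qbinom_sub_right, qbinom_add_one_left hQ (by omega), ← qbinom_sub_right a (a + 1 - b - 1),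
    ← qbinom_sub_right a (a + 1 - b)]
  ring_nf

lemma qbinom_add_two_left (hQ : ∀ n : ℕ, Q ^ (n + 1) ≠ 1) {a b : ℤ} (ha : 0 ≤ a) :
    qbinom Q (a + 2) b = qbinom Q a b + (Q ^ (a + 1 - b) + Q ^ (a + 2 - b)) * qbinom Q a (b - 1)
      + Q ^ (2 * (a + 2 - b)) * qbinom Q a (b - 2) := by
  rw [show a + 2 = a + 1 + 1 by ring, qbinom_add_one_left hQ (by omega),
    qbinom_add_one_left hQ (by omega), qbinom_add_one_left hQ (by omega),
    show a + 1 + 1 - b = a + 2 - b by ring, show a + 1 - (b - 1) = a + 2 - b by ring,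
    show b - 1 - 1 = b - 2 by ring, mul_comm 2, zpow_mul, zpow_two]
  ring

lemma qbinom_add_two_mul_qbinom_add_one {R : ℂ} (hQ : ∀ n : ℕ, Q ^ (n + 1) ≠ 1)
    (hR : ∀ n : ℕ, R ^ (n + 1) ≠ 1) {A B a j : ℤ} (hA : A = 2 * (B - j)) (h : 0 ≤ B + a + j) :
    qbinom Q (A + 2) a * qbinom R (B + 1) j =
      (qbinom Q A a + (Q ^ (A + 1 - a) + Q ^ (A + 2 - a)) * qbinom Q A (a - 1)
        + Q ^ (2 * (A + 2 - a)) * qbinom Q A (a - 2)) * qbinom R B j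
      + R ^ (B + 1 - j) * (qbinom Q (A + 2) a * qbinom R B (j - 1)) := by
  have pascal_R : qbinom Q (A + 2) a * qbinom R (B + 1) j = qbinom Q (A + 2) a * qbinom R B j
      + R ^ (B + 1 - j) * (qbinom Q (A + 2) a * qbinom R B (j - 1)) := by
    by_cases hBj : B + 1 ≠ 0 ∨ j ≠ 0
    · rw [qbinom_add_one_left hR hBj]
      ring
    · rw [qbinom_eq_zero (a := A + 2) (b := a) (by omega)]
      ring
  rw [pascal_R]
  congr 1
  by_cases hA0 : 0 ≤ A
  · rw [qbinom_add_two_left hQ hA0]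
  rw [qbinom_eq_zero (a := A) (b := a) (by omega), qbinom_eq_zero (a := A) (b := a - 1) (by omega),
    qbinom_eq_zero (a := A) (b := a - 2) (by omega)]
  -- `A ≤ -2` is even, so `[A + 2, a] ≠ 0` forces `A = -2`, `a = 0`, and then `B < j`.
  by_cases ha : 0 ≤ a ∧ a ≤ A + 2
  · rw [qbinom_eq_zero (a := B) (b := j) (by omega)]
    ring
  · rw [qbinom_eq_zero ha]
    ring

lemma qbinom_add_one_mul_qbinom (hQ : ∀ n : ℕ, Q ^ (n + 1) ≠ 1) {C n m : ℤ} (h : 0 ≤ C + m) :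
    qbinom Q (C + 1) n * qbinom Q n m = qbinom Q C n * qbinom Q n m
      + Q ^ (C + 1 - n) * (Q ^ m * (qbinom Q C (n - 1) * qbinom Q (n - 1) m)
        + qbinom Q C (n - 1) * qbinom Q (n - 1) (m - 1)) := by
  have pascal_bottom : qbinom Q C (n - 1) * qbinom Q n m =
      Q ^ m * (qbinom Q C (n - 1) * qbinom Q (n - 1) m)
        + qbinom Q C (n - 1) * qbinom Q (n - 1) (m - 1) := by
    by_cases hnm : n - 1 + 1 ≠ 0 ∨ m ≠ 0
    · have h := qbinom_add_one_left' hQ hnm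
      rw [sub_add_cancel] at h
      rw [h]
      ring
    · rw [qbinom_eq_zero (a := C) (b := n - 1) (by omega)]
      ring
  by_cases hCn : C + 1 ≠ 0 ∨ n ≠ 0
  · rw [qbinom_add_one_left hQ hCn, ← pascal_bottom]
    ring
  · rw [qbinom_eq_zero (a := n) (b := m) (by omega),
      qbinom_eq_zero (a := C) (b := n - 1) (by omega)]
    ring

lemma pow_pow_succ_ne_one (hQ : ∀ n : ℕ, Q ^ (n + 1) ≠ 1) (k n : ℕ) :
    (Q ^ (k + 1)) ^ (n + 1) ≠ 1 := by
  rw [← pow_mul, show (k + 1) * (n + 1) = k * n + k + n + 1 by ring]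
  exact hQ _

lemma pow_succ_ne_one_of_norm_lt_one (hQ : ‖Q‖ < 1) (n : ℕ) : Q ^ (n + 1) ≠ 1 := fun h => by
  have := congrArg norm h
  rw [norm_pow, norm_one] at this
  exact (pow_lt_one₀ (norm_nonneg Q) hQ n.succ_ne_zero).ne this

end QBinomial

lemma zpow_pow_eq (q : ℂ) (k : ℕ) (x : ℤ) : (q ^ k) ^ x = q ^ (k * x) := by
  rw [zpow_mul, zpow_natCast]

lemma zpow_mul_zpow_eq {q : ℂ} (hq : q ≠ 0) {a b c d : ℤ} (h : a + b = c + d) :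
    q ^ a * q ^ b = q ^ c * q ^ d := by
  rw [← zpow_add₀ hq, ← zpow_add₀ hq, h]

def GggInt (m n : ℤ) : ℤ := m * (3 * m + 1) / 2 + 2 * m * n + n ^ 2

lemma natCast_Ggg (m n : ℕ) : (Ggg m n : ℤ) = GggInt m n := by
  rw [Ggg, GggInt, show 3 * m ^ 2 + m = m * (3 * m + 1) by ring]
  push_cast
  rfl

lemma GggInt_add_one_left (m n : ℤ) : GggInt (m + 1) n = GggInt m n + 3 * m + 2 + 2 * n := by
  rw [GggInt, GggInt, show (m + 1) * (3 * (m + 1) + 1) = m * (3 * m + 1) + (3 * m + 2) * 2 by ring,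
    Int.add_mul_ediv_right _ _ two_ne_zero]
  ring

lemma GggInt_add_two_right (m n : ℤ) : GggInt m (n + 2) = GggInt m n + 4 * m + 4 * n + 4 := by
  rw [GggInt, GggInt]
  ring

-- The summand of the left side at `(m, n) = (a, 2j + ε)`, which turns `⌊n / 2⌋` into `j`.
noncomputable def lhsTerm (q : ℂ) (ε N : ℤ) (p : ℤ × ℤ) : ℂ :=
  q ^ GggInt p.1 (2 * p.2 + ε) * qbinom q (2 * (N + 1 - p.1 - 2 * p.2 - ε)) p.1 *
    qbinom (q ^ 4) (N + 1 - p.1 - p.2 - ε) p.2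

lemma lhsTerm_add_three {q : ℂ} (hq : q ≠ 0) (hq₁ : ∀ n : ℕ, q ^ (n + 1) ≠ 1) {ε N : ℤ}
    (hεN : ε ≤ N + 3) (a j : ℤ) :
    lhsTerm q ε (N + 3) (a, j) = lhsTerm q ε (N + 2) (a, j)
      + (q ^ (2 * N + 6) + q ^ (2 * N + 7)) * lhsTerm q ε (N + 1) (a - 1, j)
      + q ^ (4 * N + 11) * lhsTerm q ε N (a - 2, j)
      + q ^ (4 * N + 12) * lhsTerm q ε (N + 1) (a, j - 1) := by
  obtain ⟨A, hA⟩ : ∃ A, A = 2 * (N + 3 - a - 2 * j - ε) := ⟨_, rfl⟩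
  obtain ⟨B, hB⟩ : ∃ B, B = N + 3 - a - j - ε := ⟨_, rfl⟩
  simp only [lhsTerm]
  rw [show 2 * (N + 3 + 1 - a - 2 * j - ε) = A + 2 by omega,
    show N + 3 + 1 - a - j - ε = B + 1 by omega,
    show 2 * (N + 2 + 1 - a - 2 * j - ε) = A by omega, show N + 2 + 1 - a - j - ε = B by omega,
    show 2 * (N + 1 + 1 - (a - 1) - 2 * j - ε) = A by omega,
    show N + 1 + 1 - (a - 1) - j - ε = B by omega,
    show 2 * (N + 1 - (a - 2) - 2 * j - ε) = A by omega, show N + 1 - (a - 2) - j - ε = B by omega,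
    show 2 * (N + 1 + 1 - a - 2 * (j - 1) - ε) = A + 2 by omega,
    show N + 1 + 1 - a - (j - 1) - ε = B by omega]
  have hq₄ : ∀ n : ℕ, (q ^ 4) ^ (n + 1) ≠ 1 := pow_pow_succ_ne_one hq₁ 3
  have expand := qbinom_add_two_mul_qbinom_add_one hq₁ hq₄ (show A = 2 * (B - j) by omega)
    (show 0 ≤ B + a + j by omega)
  rw [zpow_pow_eq] at expand
  push_cast at expand
  have g₁ := GggInt_add_one_left (a - 1) (2 * j + ε)
  have g₂ := GggInt_add_one_left (a - 2) (2 * j + ε)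
  have g₃ := GggInt_add_two_right a (2 * (j - 1) + ε)
  rw [sub_add_cancel] at g₁
  rw [show a - 2 + 1 = a - 1 by ring] at g₂
  rw [show 2 * (j - 1) + ε + 2 = 2 * j + ε by ring] at g₃
  have w₁ := zpow_mul_zpow_eq hq (a := GggInt a (2 * j + ε)) (b := A + 1 - a) (c := 2 * N + 6)
    (d := GggInt (a - 1) (2 * j + ε)) (by rw [hA]; linear_combination g₁)
  have w₂ := zpow_mul_zpow_eq hq (a := GggInt a (2 * j + ε)) (b := A + 2 - a) (c := 2 * N + 7)
    (d := GggInt (a - 1) (2 * j + ε)) (by rw [hA]; linear_combination g₁)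
  have w₃ := zpow_mul_zpow_eq hq (a := GggInt a (2 * j + ε)) (b := 2 * (A + 2 - a))
    (c := 4 * N + 11) (d := GggInt (a - 2) (2 * j + ε)) (by rw [hA]; linear_combination g₁ + g₂)
  have w₄ := zpow_mul_zpow_eq hq (a := GggInt a (2 * j + ε)) (b := 4 * (B + 1 - j))
    (c := 4 * N + 12) (d := GggInt a (2 * (j - 1) + ε)) (by rw [hB]; linear_combination g₃)
  linear_combination q ^ GggInt a (2 * j + ε) * expand
    + qbinom q A (a - 1) * qbinom (q ^ 4) B j * (w₁ + w₂)
    + qbinom q A (a - 2) * qbinom (q ^ 4) B j * w₃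
    + qbinom q (A + 2) a * qbinom (q ^ 4) B (j - 1) * w₄

noncomputable def rhsTerm (q : ℂ) (N : ℤ) (p : ℤ × ℤ) : ℂ :=
  q ^ (p.1 ^ 2 + p.2 ^ 2) * qbinom (q ^ 2) (N - p.1 + 1) p.2 * qbinom (q ^ 2) p.2 p.1

lemma rhsTerm_add_two {q : ℂ} (hq : q ≠ 0) (hq₁ : ∀ n : ℕ, q ^ (n + 1) ≠ 1) {N : ℤ}
    (hN : -2 ≤ N) (m n : ℤ) :
    rhsTerm q (N + 2) (m, n) = rhsTerm q (N + 1) (m, n)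
      + q ^ (2 * N + 5) * rhsTerm q (N + 1) (m, n - 1)
      + q ^ (2 * N + 4) * rhsTerm q N (m - 1, n - 1) := by
  obtain ⟨C, hC⟩ : ∃ C, C = N + 2 - m := ⟨_, rfl⟩
  simp only [rhsTerm]
  rw [show N + 2 - m + 1 = C + 1 by omega, show N + 1 - m + 1 = C by omega,
    show N - (m - 1) + 1 = C by omega]
  have hq₂ : ∀ n : ℕ, (q ^ 2) ^ (n + 1) ≠ 1 := pow_pow_succ_ne_one hq₁ 1
  have expand := qbinom_add_one_mul_qbinom hq₂ (n := n) (show 0 ≤ C + m by omega)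
  rw [zpow_pow_eq, zpow_pow_eq] at expand
  push_cast at expand
  have w₁ : q ^ (m ^ 2 + n ^ 2) * (q ^ (2 * (C + 1 - n)) * q ^ (2 * m))
      = q ^ (2 * N + 5) * q ^ (m ^ 2 + (n - 1) ^ 2) := by
    rw [← zpow_add₀ hq]
    exact zpow_mul_zpow_eq hq (by rw [hC]; ring)
  have w₂ := zpow_mul_zpow_eq hq (a := m ^ 2 + n ^ 2) (b := 2 * (C + 1 - n))
    (c := 2 * N + 4) (d := (m - 1) ^ 2 + (n - 1) ^ 2) (by rw [hC]; ring)
  linear_combination q ^ (m ^ 2 + n ^ 2) * expand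
    + qbinom (q ^ 2) C (n - 1) * qbinom (q ^ 2) (n - 1) m * w₁
    + qbinom (q ^ 2) C (n - 1) * qbinom (q ^ 2) (n - 1) (m - 1) * w₂

lemma bounds_of_lhsTerm_ne_zero {q : ℂ} {ε N : ℤ} {p : ℤ × ℤ} (h : lhsTerm q ε N p ≠ 0) :
    (0 ≤ p.1 ∧ p.1 ≤ 2 * (N + 1 - p.1 - 2 * p.2 - ε)) ∧ 0 ≤ p.2 ∧ p.2 ≤ N + 1 - p.1 - p.2 - ε :=
  ⟨le_of_qbinom_ne_zero (right_ne_zero_of_mul (left_ne_zero_of_mul h)),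
    le_of_qbinom_ne_zero (right_ne_zero_of_mul h)⟩

lemma bounds_of_rhsTerm_ne_zero {q : ℂ} {N : ℤ} {p : ℤ × ℤ} (h : rhsTerm q N p ≠ 0) :
    (0 ≤ p.2 ∧ p.2 ≤ N - p.1 + 1) ∧ 0 ≤ p.1 ∧ p.1 ≤ p.2 :=
  ⟨le_of_qbinom_ne_zero (right_ne_zero_of_mul (left_ne_zero_of_mul h)),
    le_of_qbinom_ne_zero (right_ne_zero_of_mul h)⟩

lemma summable_lhsTerm (q : ℂ) (ε N : ℤ) : Summable (lhsTerm q ε N) := by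
  refine summable_of_ne_finset_zero (s := Icc (0, 0) (2 * (N + 1 - ε), N + 1 - ε)) fun p hp => ?_
  by_contra h
  have := bounds_of_lhsTerm_ne_zero h
  exact hp (mem_Icc.2 ⟨⟨by omega, by omega⟩, ⟨by omega, by omega⟩⟩)

lemma summable_rhsTerm (q : ℂ) (N : ℤ) : Summable (rhsTerm q N) := by
  refine summable_of_ne_finset_zero (s := Icc (0, 0) (N + 1, N + 1)) fun p hp => ?_
  by_contra h
  have := bounds_of_rhsTerm_ne_zero h
  exact hp (mem_Icc.2 ⟨⟨by omega, by omega⟩, ⟨by omega, by omega⟩⟩)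

lemma hasSum_comp_sub {f : ℤ × ℤ → ℂ} (hf : Summable f) (x : ℤ × ℤ) :
    HasSum (fun p => f (p - x)) (∑' p, f p) :=
  (Equiv.subRight x).hasSum_iff.2 hf.hasSum

noncomputable def lhsSum (q : ℂ) (ε N : ℤ) : ℂ := ∑' p, lhsTerm q ε N p

noncomputable def rhsSum (q : ℂ) (N : ℤ) : ℂ := ∑' p, rhsTerm q N p

lemma lhsSum_add_three {q : ℂ} (hq : q ≠ 0) (hq₁ : ∀ n : ℕ, q ^ (n + 1) ≠ 1) {ε N : ℤ}
    (hεN : ε ≤ N + 3) :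
    lhsSum q ε (N + 3) = lhsSum q ε (N + 2)
      + (q ^ (2 * N + 6) + q ^ (2 * N + 7) + q ^ (4 * N + 12)) * lhsSum q ε (N + 1)
      + q ^ (4 * N + 11) * lhsSum q ε N := by
  have hs := summable_lhsTerm q ε
  calc lhsSum q ε (N + 3)
      = ∑' p, (lhsTerm q ε (N + 2) p
          + (q ^ (2 * N + 6) + q ^ (2 * N + 7)) * lhsTerm q ε (N + 1) (p - (1, 0))
          + q ^ (4 * N + 11) * lhsTerm q ε N (p - (2, 0))
          + q ^ (4 * N + 12) * lhsTerm q ε (N + 1) (p - (0, 1))) :=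
        tsum_congr fun ⟨a, j⟩ => by
          simpa only [Prod.mk_sub_mk, sub_zero] using lhsTerm_add_three hq hq₁ hεN a j
    _ = lhsSum q ε (N + 2) + (q ^ (2 * N + 6) + q ^ (2 * N + 7)) * lhsSum q ε (N + 1)
          + q ^ (4 * N + 11) * lhsSum q ε N + q ^ (4 * N + 12) * lhsSum q ε (N + 1) :=
        ((((hs _).hasSum.add ((hasSum_comp_sub (hs _) _).mul_left _)).add
          ((hasSum_comp_sub (hs _) _).mul_left _)).add ((hasSum_comp_sub (hs _) _).mul_left _)).tsum_eq
    _ = _ := by ring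

lemma rhsSum_add_two {q : ℂ} (hq : q ≠ 0) (hq₁ : ∀ n : ℕ, q ^ (n + 1) ≠ 1) {N : ℤ}
    (hN : -2 ≤ N) :
    rhsSum q (N + 2) = (1 + q ^ (2 * N + 5)) * rhsSum q (N + 1) + q ^ (2 * N + 4) * rhsSum q N := by
  have hs := summable_rhsTerm q
  calc rhsSum q (N + 2)
      = ∑' p, (rhsTerm q (N + 1) p + q ^ (2 * N + 5) * rhsTerm q (N + 1) (p - (0, 1))
          + q ^ (2 * N + 4) * rhsTerm q N (p - (1, 1))) :=
        tsum_congr fun ⟨m, n⟩ => by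
          simpa only [Prod.mk_sub_mk, sub_zero] using rhsTerm_add_two hq hq₁ hN m n
    _ = rhsSum q (N + 1) + q ^ (2 * N + 5) * rhsSum q (N + 1) + q ^ (2 * N + 4) * rhsSum q N :=
        (((hs _).hasSum.add ((hasSum_comp_sub (hs _) _).mul_left _)).add
          ((hasSum_comp_sub (hs _) _).mul_left _)).tsum_eq
    _ = _ := by ring

lemma rhsSum_add_three {q : ℂ} (hq : q ≠ 0) (hq₁ : ∀ n : ℕ, q ^ (n + 1) ≠ 1) {N : ℤ}
    (hN : -2 ≤ N) :
    rhsSum q (N + 3) = rhsSum q (N + 2)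
      + (q ^ (2 * N + 6) + q ^ (2 * N + 7) + q ^ (4 * N + 12)) * rhsSum q (N + 1)
      + q ^ (4 * N + 11) * rhsSum q N := by
  have h₁ := rhsSum_add_two hq hq₁ (N := N + 1) (by omega)
  have h₀ := rhsSum_add_two hq hq₁ hN
  rw [show N + 1 + 2 = N + 3 by ring, show N + 1 + 1 = N + 2 by ring] at h₁
  rw [show 2 * (N + 1) + 4 = 2 * N + 6 by ring, show 2 * (N + 1) + 5 = 2 * N + 7 by ring] at h₁
  have e₁ : q ^ (2 * N + 7) * q ^ (2 * N + 5) = q ^ (4 * N + 12) := by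
    rw [← zpow_add₀ hq]; ring_nf
  have e₂ : q ^ (2 * N + 7) * q ^ (2 * N + 4) = q ^ (4 * N + 11) := by
    rw [← zpow_add₀ hq]; ring_nf
  rw [h₁]
  linear_combination q ^ (2 * N + 7) * h₀ + rhsSum q (N + 1) * e₁ + rhsSum q N * e₂

lemma eq_of_recurrence {u v a b c : ℤ → ℂ} {n₀ : ℤ}
    (hu : ∀ n ≥ n₀, u (n + 3) = a n * u (n + 2) + b n * u (n + 1) + c n * u n)
    (hv : ∀ n ≥ n₀, v (n + 3) = a n * v (n + 2) + b n * v (n + 1) + c n * v n)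
    (h₀ : u n₀ = v n₀) (h₁ : u (n₀ + 1) = v (n₀ + 1)) (h₂ : u (n₀ + 2) = v (n₀ + 2)) :
    ∀ n ≥ n₀, u n = v n := by
  suffices ∀ n ≥ n₀, u n = v n ∧ u (n + 1) = v (n + 1) ∧ u (n + 2) = v (n + 2) from
    fun n hn => (this n hn).1
  intro n hn
  induction n, hn using Int.leInduction with
  | base => exact ⟨h₀, h₁, h₂⟩
  | succ n hn ih =>
    obtain ⟨e₀, e₁, e₂⟩ := ih
    refine ⟨e₁, by rwa [add_assoc], ?_⟩
    rw [add_assoc, show (1 : ℤ) + 2 = 3 by norm_num, hu n hn, hv n hn, e₀, e₁, e₂]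

lemma lhsSum_eq_of_le {q : ℂ} {ε N : ℤ} (h : N ≤ ε) : lhsSum q ε N = lhsTerm q ε N 0 :=
  tsum_eq_single 0 fun p hp => by
    by_contra hp'
    have := bounds_of_lhsTerm_ne_zero hp'
    exact hp (Prod.ext (by simp; omega) (by simp; omega))

lemma rhsSum_eq_of_nonpos {q : ℂ} {N : ℤ} (h : N ≤ 0) :
    rhsSum q N = rhsTerm q N 0 + rhsTerm q N (0, 1) := by
  rw [rhsSum, tsum_eq_sum (s := {0, (0, 1)}), sum_pair (by decide)]
  intro p hp
  by_contra hp'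
  have := bounds_of_rhsTerm_ne_zero hp'
  simp only [mem_insert, mem_singleton, Prod.ext_iff, Prod.fst_zero, Prod.snd_zero] at hp
  omega

theorem lhsSum_add_lhsSum_eq_rhsSum {q : ℂ} (hq : q ≠ 0) (hq₁ : ∀ n : ℕ, q ^ (n + 1) ≠ 1) :
    ∀ N ≥ -2, lhsSum q 0 N + lhsSum q 1 N = rhsSum q N := by
  have hq₂ : ∀ n : ℕ, (q ^ 2) ^ (n + 1) ≠ 1 := pow_pow_succ_ne_one hq₁ 1
  have hq₄ : ∀ n : ℕ, (q ^ 4) ^ (n + 1) ≠ 1 := pow_pow_succ_ne_one hq₁ 3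
  refine eq_of_recurrence (a := fun _ => 1)
    (b := fun N => q ^ (2 * N + 6) + q ^ (2 * N + 7) + q ^ (4 * N + 12))
    (c := fun N => q ^ (4 * N + 11)) (fun N hN => ?_) (fun N hN => ?_) ?_ ?_ ?_
  · rw [lhsSum_add_three hq hq₁ (by omega), lhsSum_add_three hq hq₁ (by omega)]
    ring
  · rw [one_mul]
    exact rhsSum_add_three hq hq₁ hN
  all_goals
    rw [lhsSum_eq_of_le (by norm_num), lhsSum_eq_of_le (by norm_num), rhsSum_eq_of_nonpos (by norm_num)]
    norm_num [lhsTerm, rhsTerm, GggInt, qbinom_eq_zero, qbinom_zero_right hq₁, qbinom_zero_right hq₂,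
      qbinom_zero_right hq₄, qbinom_self hq₂]

lemma tsum_natCast_lhsTerm (q : ℂ) (ε N : ℤ) :
    ∑' p : ℕ × ℕ, lhsTerm q ε N (p.1, p.2) = lhsSum q ε N :=
  (Nat.cast_injective.prodMap Nat.cast_injective).tsum_eq fun p hp => by
    have := bounds_of_lhsTerm_ne_zero hp
    exact ⟨(p.1.toNat, p.2.toNat), Prod.ext (by simp; omega) (by simp; omega)⟩

lemma tsum_natCast_rhsTerm (q : ℂ) (N : ℤ) :
    ∑' p : ℕ × ℕ, rhsTerm q N (p.1, p.2) = rhsSum q N :=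
  (Nat.cast_injective.prodMap Nat.cast_injective).tsum_eq fun p hp => by
    have := bounds_of_rhsTerm_ne_zero hp
    exact ⟨(p.1.toNat, p.2.toNat), Prod.ext (by simp; omega) (by simp; omega)⟩

lemma summand_eq_lhsTerm (q : ℂ) (N m n : ℕ) :
    q ^ (Ggg m n) * qbinom q (2 * (N : ℤ) - 2 * m - 2 * n + 2) m
        * qbinom (q ^ 4) ((N : ℤ) - m - n + 1 + (n / 2 : ℕ)) ((n / 2 : ℕ) : ℤ)
      = lhsTerm q (n % 2 : ℕ) N (m, (n / 2 : ℕ)) := by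
  have hn : 2 * ((n / 2 : ℕ) : ℤ) + ((n % 2 : ℕ) : ℤ) = n := by omega
  simp only [lhsTerm]
  rw [← zpow_natCast, natCast_Ggg, hn,
    show 2 * (N : ℤ) - 2 * m - 2 * n + 2 = 2 * (N + 1 - m - 2 * (n / 2 : ℕ) - (n % 2 : ℕ)) by
      omega,
    show (N : ℤ) - m - n + 1 + (n / 2 : ℕ) = N + 1 - m - (n / 2 : ℕ) - (n % 2 : ℕ) by omega]

lemma tsum_eq_lhsSum_add_lhsSum (q : ℂ) (N : ℕ) :
    ∑' p : ℕ × ℕ, q ^ (Ggg p.1 p.2) * qbinom q (2 * (N : ℤ) - 2 * p.1 - 2 * p.2 + 2) p.1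
        * qbinom (q ^ 4) ((N : ℤ) - p.1 - p.2 + 1 + (p.2 / 2 : ℕ)) ((p.2 / 2 : ℕ) : ℤ)
      = lhsSum q 0 N + lhsSum q 1 N := by
  let e : (ℕ × ℕ) ⊕ (ℕ × ℕ) ≃ ℕ × ℕ :=
    (Equiv.prodSumDistrib ℕ ℕ ℕ).symm.trans ((Equiv.refl ℕ).prodCongr Equiv.natSumNatEquivNat)
  simp_rw [summand_eq_lhsTerm, ← e.tsum_eq]
  have h₀ : ∀ x, lhsTerm q ((e (.inl x)).2 % 2 : ℕ) N ((e (.inl x)).1, ((e (.inl x)).2 / 2 : ℕ))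
      = lhsTerm q 0 N (x.1, x.2) := fun ⟨m, j⟩ => by
    have : e (.inl (m, j)) = (m, 2 * j) := by simp [e, Equiv.natSumNatEquivNat_apply]
    rw [this, show 2 * j % 2 = 0 by omega, show 2 * j / 2 = j by omega, Nat.cast_zero]
  have h₁ : ∀ x, lhsTerm q ((e (.inr x)).2 % 2 : ℕ) N ((e (.inr x)).1, ((e (.inr x)).2 / 2 : ℕ))
      = lhsTerm q 1 N (x.1, x.2) := fun ⟨m, j⟩ => by
    have : e (.inr (m, j)) = (m, 2 * j + 1) := by simp [e, Equiv.natSumNatEquivNat_apply]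
    rw [this, show (2 * j + 1) % 2 = 1 by omega, show (2 * j + 1) / 2 = j by omega, Nat.cast_one]
  have inj : Function.Injective (Prod.map (Nat.cast : ℕ → ℤ) (Nat.cast : ℕ → ℤ)) :=
    Nat.cast_injective.prodMap Nat.cast_injective
  rw [Summable.tsum_sum, tsum_congr h₀, tsum_congr h₁, tsum_natCast_lhsTerm, tsum_natCast_lhsTerm]
  · exact (summable_lhsTerm q 0 N).comp_injective inj |>.congr fun x => (h₀ x).symm
  · exact (summable_lhsTerm q 1 N).comp_injective inj |>.congr fun x => (h₁ x).symm

lemma tsum_eq_rhsSum (q : ℂ) (N : ℕ) :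
    ∑' p : ℕ × ℕ, q ^ (p.1 ^ 2 + p.2 ^ 2) * qbinom (q ^ 2) ((N : ℤ) - p.1 + 1) p.2
        * qbinom (q ^ 2) p.2 p.1 = rhsSum q N := by
  rw [← tsum_natCast_rhsTerm]
  refine tsum_congr fun p => ?_
  rw [rhsTerm, ← zpow_natCast]
  push_cast
  rfl

lemma Ggg_pos {m n : ℕ} (h : (m, n) ≠ 0) : 0 < Ggg m n := by
  unfold Ggg
  rcases Nat.eq_zero_or_pos n with rfl | hn
  · have hm : 0 < m := Nat.pos_of_ne_zero fun hm => h (by simp [hm])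
    have : 4 ≤ 3 * m ^ 2 + m := by nlinarith
    omega
  · have : 0 < n ^ 2 := by positivity
    omega

lemma tsum_lhs_at_zero (N : ℕ) :
    ∑' p : ℕ × ℕ, (0 : ℂ) ^ (Ggg p.1 p.2) * qbinom 0 (2 * (N : ℤ) - 2 * p.1 - 2 * p.2 + 2) p.1
        * qbinom (0 ^ 4) ((N : ℤ) - p.1 - p.2 + 1 + (p.2 / 2 : ℕ)) ((p.2 / 2 : ℕ) : ℤ) = 1 := by
  have h₀ : ∀ n : ℕ, (0 : ℂ) ^ (n + 1) ≠ 1 := by simp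
  rw [tsum_eq_single 0 fun p hp => by rw [zero_pow (Ggg_pos hp).ne', zero_mul, zero_mul]]
  simp only [Ggg, Prod.fst_zero, Prod.snd_zero]
  norm_num [qbinom_zero_right h₀ (by positivity : (0 : ℤ) ≤ 2 * N + 2),
    qbinom_zero_right h₀ (by positivity : (0 : ℤ) ≤ N + 1)]

lemma tsum_rhs_at_zero (N : ℕ) :
    ∑' p : ℕ × ℕ, (0 : ℂ) ^ (p.1 ^ 2 + p.2 ^ 2) * qbinom (0 ^ 2) ((N : ℤ) - p.1 + 1) p.2
        * qbinom (0 ^ 2) p.2 p.1 = 1 := by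
  have h₀ : ∀ n : ℕ, (0 : ℂ) ^ (n + 1) ≠ 1 := by simp
  rw [tsum_eq_single 0 fun p hp => by
    rw [zero_pow fun h => hp (by simp_all [Prod.ext_iff]), zero_mul, zero_mul]]
  simp only [Prod.fst_zero, Prod.snd_zero]
  norm_num [qbinom_zero_right h₀ (by positivity : (0 : ℤ) ≤ N + 1), qbinom_self h₀ le_rfl]

/-- finite analogue, first Göllnitz–Gordon identity
(Berkovich–McCoy–Orrick comparison). -/
theorem stmt4 (N : ℕ) (q : ℂ) (hq : ‖q‖ < 1) :
    ∑' p : ℕ × ℕ, q ^ (Ggg p.1 p.2)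
        * qbinom q (2 * (N : ℤ) - 2 * p.1 - 2 * p.2 + 2) p.1
        * qbinom (q ^ 4) ((N : ℤ) - p.1 - p.2 + 1 + (p.2 / 2 : ℕ)) ((p.2 / 2 : ℕ) : ℤ)
      = ∑' p : ℕ × ℕ, q ^ (p.1 ^ 2 + p.2 ^ 2)
          * qbinom (q ^ 2) ((N : ℤ) - p.1 + 1) p.2
          * qbinom (q ^ 2) p.2 p.1 := by
  obtain rfl | hq₀ := eq_or_ne q 0
  · rw [tsum_lhs_at_zero, tsum_rhs_at_zero]
  rw [tsum_eq_lhsSum_add_lhsSum, tsum_eq_rhsSum]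
  exact lhsSum_add_lhsSum_eq_rhsSum hq₀ (pow_succ_ne_one_of_norm_lt_one hq) N (by omega)
end
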